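/- arXiv:1405.7147 — 2 statements merged into one kernel-verified Lean document; each statement's English description precedes it below -/
import Mathlib

section
/- Let S be a finite commutative ring with identity of characteristic 2, let C be a self-dual code over S of length n with k×n generator matrix G whose rows are r₁, …, r_k (so C is the row span of G and C = C^⊥). Let c be a unit in S with c² = 1, let X ∈ Sⁿ satisfy ⟨X,X⟩ = 1, and set yᵢ = ⟨rᵢ, X⟩ for 1 ≤ i ≤ k. Then the (k+1)×(n+2) matrix whose first row is (1, 0, X) and whose (i+1)-st row is (yᵢ, c·yᵢ, rᵢ) generates a self-dual code D over S of length n+2. -/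
noncomputable section

/-- The dual of a code `C ⊆ Sⁿ` with respect to the Euclidean inner product. -/
def dualSet {S ι : Type*} [CommRing S] [Fintype ι] (C : Set (ι → S)) : Set (ι → S) :=
  {x | ∀ y ∈ C, ∑ i, x i * y i = 0}

lemma mem_dualSet_span_iff {S ι κ : Type*} [CommRing S] [Fintype ι] (G : κ → ι → S)
    (x : ι → S) :
    x ∈ dualSet ((Submodule.span S (Set.range G) : Submodule S (ι → S)) : Set (ι → S)) ↔
      ∀ i, ∑ j, x j * G i j = 0 := by
  constructor
  · intro h i
    exact h (G i) (Submodule.subset_span ⟨i, rfl⟩)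
  · intro h w hw
    induction hw using Submodule.span_induction with
    | mem w hw => obtain ⟨i, rfl⟩ := hw; exact h i
    | zero => simp
    | add w z hw hz hw' hz' =>
        simpa [mul_add, Finset.sum_add_distrib] using congrArg₂ (· + ·) hw' hz'
    | smul a w hw hw' =>
        simp only [Pi.smul_apply, smul_eq_mul, mul_left_comm, ← Finset.mul_sum, hw', mul_zero]

lemma extension_self_dual_aux
    {S : Type*} [CommRing S] (hchar : (1 : S) + 1 = 0)
    (n k : ℕ) (G : Fin k → Fin n → S)
    (C : Submodule S (Fin n → S))
    (hCG : C = Submodule.span S (Set.range G))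
    (hC : (C : Set (Fin n → S)) = dualSet (C : Set (Fin n → S)))
    (c : S) (hc2 : c ^ 2 = 1)
    (X : Fin n → S) (hX : ∑ i, X i * X i = 1)
    (y : Fin k → S) (hy : ∀ i, y i = ∑ j, G i j * X j)
    (Gext : Option (Fin k) → (Fin 2 ⊕ Fin n) → S)
    (hGe : ∀ r, Gext r = Option.elim r (Sum.elim ![1, 0] X)
        (fun i => Sum.elim ![y i, c * y i] (G i))) :
    ((Submodule.span S (Set.range Gext) : Submodule S ((Fin 2 ⊕ Fin n) → S)) :
        Set ((Fin 2 ⊕ Fin n) → S)) =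
      dualSet ((Submodule.span S (Set.range Gext) : Submodule S ((Fin 2 ⊕ Fin n) → S)) :
        Set ((Fin 2 ⊕ Fin n) → S)) := by
  have h2 : ∀ s : S, s + s = 0 := by
    intro s
    have := congrArg (· * s) hchar
    simpa [add_mul] using this
  have e00 : Gext none (Sum.inl 0) = 1 := by rw [hGe]; rfl
  have e01 : Gext none (Sum.inl 1) = 0 := by rw [hGe]; rfl
  have e0r : ∀ j, Gext none (Sum.inr j) = X j := fun _ => by rw [hGe]; rfl
  have ei0 : ∀ i, Gext (some i) (Sum.inl 0) = y i := fun _ => by rw [hGe]; rfl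
  have ei1 : ∀ i, Gext (some i) (Sum.inl 1) = c * y i := fun _ => by rw [hGe]; rfl
  have eir : ∀ i j, Gext (some i) (Sum.inr j) = G i j := fun _ _ => by rw [hGe]; rfl
  -- rows of G are pairwise orthogonal
  have hrow : ∀ i i', ∑ j, G i j * G i' j = 0 := by
    intro i i'
    have hGi : G i ∈ (C : Set (Fin n → S)) := by
      rw [hCG]; exact Submodule.subset_span ⟨i, rfl⟩
    rw [hC] at hGi
    exact hGi (G i') (by rw [hCG]; exact Submodule.subset_span ⟨i', rfl⟩)
  have expand : ∀ z w : (Fin 2 ⊕ Fin n) → S,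
      ∑ p, z p * w p =
        z (Sum.inl 0) * w (Sum.inl 0) + z (Sum.inl 1) * w (Sum.inl 1) +
        ∑ j, z (Sum.inr j) * w (Sum.inr j) := by
    intro z w
    rw [Fintype.sum_sum_type, Fin.sum_univ_two]
  -- pairwise orthogonality of the extended rows
  have horth : ∀ r r' : Option (Fin k), ∑ p, Gext r p * Gext r' p = 0 := by
    intro r r'
    rw [expand]
    match r, r' with
    | none, none =>
        rw [e00, e01]
        have : ∑ j, Gext none (Sum.inr j) * Gext none (Sum.inr j) = 1 := by
          rw [← hX]; exact Finset.sum_congr rfl fun j _ => by rw [e0r]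
        rw [this]
        linear_combination hchar
    | none, some i =>
        rw [e00, e01, ei0 i, ei1 i]
        have : ∑ j, Gext none (Sum.inr j) * Gext (some i) (Sum.inr j) = y i := by
          rw [hy]
          exact Finset.sum_congr rfl fun j _ => by rw [e0r, eir]; ring
        rw [this]
        linear_combination (y i) * hchar
    | some i, none =>
        rw [e00, e01, ei0 i, ei1 i]
        have : ∑ j, Gext (some i) (Sum.inr j) * Gext none (Sum.inr j) = y i := by
          rw [hy]
          exact Finset.sum_congr rfl fun j _ => by rw [e0r, eir]
        rw [this]
        linear_combination (y i) * hchar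
    | some i, some i' =>
        rw [ei0 i, ei1 i, ei0 i', ei1 i']
        have : ∑ j, Gext (some i) (Sum.inr j) * Gext (some i') (Sum.inr j) = 0 := by
          rw [← hrow i i']
          exact Finset.sum_congr rfl fun j _ => by rw [eir, eir]
        rw [this, add_zero]
        have hcc : c * y i * (c * y i') = y i * y i' := by
          have : c * y i * (c * y i') = c ^ 2 * (y i * y i') := by ring
          rw [this, hc2, one_mul]
        rw [hcc]
        exact h2 _
  ext z
  constructor
  · -- D ⊆ dual D
    intro hz
    rw [mem_dualSet_span_iff]
    induction hz using Submodule.span_induction with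
    | mem w hw => obtain ⟨r, rfl⟩ := hw; intro r'; exact horth r r'
    | zero => intro r; simp
    | add w z hw hz hw' hz' =>
        intro r
        simpa [add_mul, Finset.sum_add_distrib] using congrArg₂ (· + ·) (hw' r) (hz' r)
    | smul a w hw hw' =>
        intro r
        simp only [Pi.smul_apply, smul_eq_mul, mul_assoc, ← Finset.mul_sum, hw' r, mul_zero]
  · -- dual D ⊆ D
    intro hz
    rw [mem_dualSet_span_iff] at hz
    set a := z (Sum.inl 0) with ha
    set b := z (Sum.inl 1) with hb
    have hnone : a + ∑ j, z (Sum.inr j) * X j = 0 := by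
      have := hz none
      rw [expand] at this
      rw [e00, e01] at this
      calc a + ∑ j, z (Sum.inr j) * X j
          = a * 1 + z (Sum.inl 1) * 0 + ∑ j, z (Sum.inr j) * Gext none (Sum.inr j) := by
            rw [mul_one, mul_zero, add_zero]
            congr 1
            exact Finset.sum_congr rfl fun j _ => by rw [e0r]
        _ = 0 := this
    have hsome : ∀ i, a * y i + b * (c * y i) + ∑ j, z (Sum.inr j) * G i j = 0 := by
      intro i
      have := hz (some i)
      rw [expand, ei0, ei1] at this
      calc a * y i + b * (c * y i) + ∑ j, z (Sum.inr j) * G i j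
          = a * y i + b * (c * y i) + ∑ j, z (Sum.inr j) * Gext (some i) (Sum.inr j) := by
            congr 1
            exact Finset.sum_congr rfl fun j _ => by rw [eir]
        _ = 0 := this
    -- the corrected vector u lies in C
    set u : Fin n → S := fun j => z (Sum.inr j) + a * X j + b * c * X j with hu
    have huC : u ∈ Submodule.span S (Set.range G) := by
      rw [← hCG]
      have : u ∈ dualSet (C : Set (Fin n → S)) := by
        rw [hCG, mem_dualSet_span_iff]
        intro i
        have h1 : ∑ j, u j * G i j =
            (∑ j, z (Sum.inr j) * G i j) + a * (∑ j, X j * G i j)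
              + b * c * (∑ j, X j * G i j) := by
          simp only [hu, add_mul, Finset.sum_add_distrib, Finset.mul_sum]
          congr 1
          · congr 1
            exact Finset.sum_congr rfl fun j _ => by ring
          · exact Finset.sum_congr rfl fun j _ => by ring
        have hyy : ∑ j, X j * G i j = y i := by
          rw [hy]; exact Finset.sum_congr rfl fun j _ => by ring
        rw [h1, hyy]
        linear_combination hsome i
      rw [← hC] at this
      exact this
    obtain ⟨lam, hlam⟩ := (Submodule.mem_span_range_iff_exists_fun S).mp huC
    have hulam : ∀ j, ∑ i, lam i * G i j = u j := by
      intro j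
      have := congrFun hlam j
      simpa [Finset.sum_apply] using this
    -- inner products with X
    have hvX : ∑ j, z (Sum.inr j) * X j = a := by
      linear_combination hnone - a * hchar
    have hlamy : ∑ i, lam i * y i = b * c := by
      have h1 : ∑ i, lam i * y i = ∑ j, u j * X j := by
        calc ∑ i, lam i * y i = ∑ i, ∑ j, lam i * G i j * X j := by
              refine Finset.sum_congr rfl fun i _ => ?_
              rw [hy, Finset.mul_sum]
              exact Finset.sum_congr rfl fun j _ => by ring
          _ = ∑ j, ∑ i, lam i * G i j * X j := Finset.sum_comm
          _ = ∑ j, u j * X j := by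
              refine Finset.sum_congr rfl fun j _ => ?_
              rw [← hulam j, Finset.sum_mul]
      have h2' : ∑ j, u j * X j = a + a * 1 + b * c * 1 := by
        simp only [hu, add_mul, Finset.sum_add_distrib]
        rw [hvX, ← hX, Finset.mul_sum, Finset.mul_sum]
        congr 1
        · congr 1
          exact Finset.sum_congr rfl fun j _ => by ring
        · exact Finset.sum_congr rfl fun j _ => by ring
      rw [h1, h2']
      linear_combination a * hchar
    -- assemble z as an explicit combination
    show z ∈ Submodule.span S (Set.range Gext)
    have hmem : ((a + b * c) • Gext none + ∑ i, lam i • Gext (some i)) ∈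
        Submodule.span S (Set.range Gext) := by
      refine Submodule.add_mem _ (Submodule.smul_mem _ _ (Submodule.subset_span ⟨none, rfl⟩)) ?_
      exact Submodule.sum_mem _ fun i _ =>
        Submodule.smul_mem _ _ (Submodule.subset_span ⟨some i, rfl⟩)
    have hzeq : z = (a + b * c) • Gext none + ∑ i, lam i • Gext (some i) := by
      funext p
      have happ : ((a + b * c) • Gext none + ∑ i, lam i • Gext (some i)) p =
          (a + b * c) * Gext none p + ∑ i, lam i * Gext (some i) p := by
        simp [Finset.sum_apply]
      rw [happ]
      match p with
      | Sum.inl 0 =>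
          rw [e00]
          have : ∑ i, lam i * Gext (some i) (Sum.inl 0) = b * c := by
            rw [← hlamy]
            exact Finset.sum_congr rfl fun i _ => by rw [ei0]
          rw [this]
          show a = (a + b * c) * 1 + b * c
          linear_combination (-(b * c)) * hchar
      | Sum.inl 1 =>
          rw [e01]
          have : ∑ i, lam i * Gext (some i) (Sum.inl 1) = c * (b * c) := by
            rw [← hlamy, Finset.mul_sum]
            exact Finset.sum_congr rfl fun i _ => by rw [ei1]; ring
          rw [this]
          show b = (a + b * c) * 0 + c * (b * c)
          linear_combination (-b) * hc2
      | Sum.inr j =>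
          rw [e0r]
          have : ∑ i, lam i * Gext (some i) (Sum.inr j) = u j := by
            rw [← hulam j]
            exact Finset.sum_congr rfl fun i _ => by rw [eir]
          rw [this]
          show z (Sum.inr j) = (a + b * c) * X j
            + (z (Sum.inr j) + a * X j + b * c * X j)
          linear_combination (-(a + b * c) * X j) * hchar
    rw [hzeq]
    exact hmem

/-- Extension theorem: let `S` be a finite commutative ring of characteristic 2,
`C` a self-dual code of length `n` over `S` generated by the rows `r₁, …, r_k` of `G`,
`c` a unit of `S` with `c² = 1`, and `X ∈ Sⁿ` with `⟨X, X⟩ = 1`.  With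
`yᵢ = ⟨rᵢ, X⟩`, the `(k+1) × (n+2)` matrix with first row `(1, 0, X)` and remaining
rows `(yᵢ, c yᵢ, rᵢ)` generates a self-dual code of length `n + 2` over `S`. -/
theorem extension_self_dual
    {S : Type*} [CommRing S] [Fintype S] (hchar : (1 : S) + 1 = 0)
    (n k : ℕ) (G : Fin k → Fin n → S)
    (C : Submodule S (Fin n → S))
    (hCG : C = Submodule.span S (Set.range G))
    (hC : (C : Set (Fin n → S)) = dualSet (C : Set (Fin n → S)))
    (c : S) (hc : IsUnit c) (hc2 : c ^ 2 = 1)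
    (X : Fin n → S) (hX : ∑ i, X i * X i = 1) :
    letI y : Fin k → S := fun i => ∑ j, G i j * X j
    letI Gext : Option (Fin k) → (Fin 2 ⊕ Fin n) → S := fun r =>
      Option.elim r (Sum.elim ![1, 0] X)
        (fun i => Sum.elim ![y i, c * y i] (G i))
    letI D : Submodule S ((Fin 2 ⊕ Fin n) → S) := Submodule.span S (Set.range Gext)
    (D : Set ((Fin 2 ⊕ Fin n) → S)) = dualSet (D : Set ((Fin 2 ⊕ Fin n) → S)) := by
  exact extension_self_dual_aux hchar n k G C hCG hC c hc2 X hX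
    (fun i => ∑ j, G i j * X j) (fun _ => rfl) _ (fun _ => rfl)

end
end

section
/- Let S be a finite commutative ring with identity of characteristic 2 and let C be a self-dual code of length 2n over S generated by the matrix G = [ I_n | A ] in standard form. For each i let rᵢ be the sum of the entries of the i-th row of A. Let c be a unit in S with c² = 1, let X = (x₁, …, x_n) ∈ Sⁿ satisfy ⟨X,X⟩ = 1 + n·1, and set yᵢ = xᵢ + rᵢ. Then the (n+1)×(2n+2) matrix G* whose first row is (1, 0, x₁, …, x_n, 1, …, 1) (with n trailing ones) and whose (i+1)-st row is (yᵢ, c·yᵢ, eᵢ, Aᵢ) — where eᵢ is the i-th row of I_n and Aᵢ is the i-th row of A — generates a self-dual code C* over S of length 2n+2. -/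
/-!
The rows of `G*` are pairwise orthogonal: in characteristic 2 this only uses `A Aᵀ = I` (which is
the self-orthogonality of `[ I | A ]`), `c² = 1` and `⟨X, X⟩ = 1 + n`. Conversely, let `z` be
orthogonal to every row. Subtracting the combination of the rows `i` with coefficients the
`eᵢ`-block of `z` leaves `m = (m₀, m₁, 0, w)`, still orthogonal to every row. Orthogonality to
row `i` says `A w = s y` with `s = m₀ + c m₁`, so `w = s Aᵀ y` as `Aᵀ A = I`; orthogonality to the
first row then pins down `m₀`, and `s = m₀ + c m₁` pins down `m₁`: `m` is `s` times the first row
plus `Σ xᵢ` times row `i`. Hence `z` lies in the row span.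
-/

noncomputable section

open Matrix Submodule

section Duality

variable {S ι κ : Type*} [CommRing S] [Fintype ι]

theorem mem_dualSet_span_range_iff (v : κ → ι → S) (x : ι → S) :
    x ∈ dualSet (span S (Set.range v) : Set (ι → S)) ↔ ∀ a, x ⬝ᵥ v a = 0 := by
  refine ⟨fun h a => h _ (subset_span ⟨a, rfl⟩), fun h y hy => ?_⟩
  change x ⬝ᵥ y = 0
  induction hy using span_induction with
  | mem y hy => obtain ⟨a, rfl⟩ := hy; exact h a
  | zero => exact dotProduct_zero x
  | add y z _ _ hy hz => rw [dotProduct_add, hy, hz, add_zero]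
  | smul t y _ hy => rw [dotProduct_smul, hy, smul_zero]

theorem coe_span_range_eq_dualSet (v : κ → ι → S) (horth : ∀ a b, v a ⬝ᵥ v b = 0)
    (hdual : ∀ x, (∀ a, x ⬝ᵥ v a = 0) → x ∈ span S (Set.range v)) :
    (span S (Set.range v) : Set (ι → S)) = dualSet (span S (Set.range v) : Set (ι → S)) := by
  ext x
  refine ⟨fun hx => ?_, fun hx => hdual x ((mem_dualSet_span_range_iff v x).1 hx)⟩
  rw [mem_dualSet_span_range_iff]
  intro a
  have hva : v a ∈ dualSet (span S (Set.range v) : Set (ι → S)) :=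
    (mem_dualSet_span_range_iff v _).2 (horth a)
  rw [dotProduct_comm]
  exact hva x hx

end Duality

section StandardForm

variable {S κ : Type*} [CommRing S] [Fintype κ] [DecidableEq κ]

/-- The `i`-th row of the standard-form generator matrix `[ I | A ]`. -/
def stdRow (A : Matrix κ κ S) (i : κ) : κ ⊕ κ → S :=
  Sum.elim (fun j => if i = j then (1 : S) else 0) (A i)

theorem stdRow_dotProduct_stdRow (A : Matrix κ κ S) (i j : κ) :
    stdRow A i ⬝ᵥ stdRow A j = (if i = j then 1 else 0) + (A * Aᵀ) i j := by
  simp [stdRow, dotProduct, Fintype.sum_sum_type, mul_apply]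

theorem mul_transpose_eq_one_of_stdRow_orthogonal (hchar : (1 : S) + 1 = 0)
    {A : Matrix κ κ S} (horth : ∀ i j, stdRow A i ⬝ᵥ stdRow A j = 0) : A * Aᵀ = 1 := by
  ext i j
  have h := horth i j
  rw [stdRow_dotProduct_stdRow] at h
  rw [one_apply]
  linear_combination h - (if i = j then 1 else 0) * hchar

end StandardForm

namespace SelfDualExtension

variable {S κ : Type*} [CommRing S] [Fintype κ] [DecidableEq κ]
  (A : Matrix κ κ S) (c : S) (X : κ → S)

def y : κ → S := fun i => X i + ∑ j, A i j

/-- The rows of `G*`: `none` is the first row `(1, 0, X, 1, …, 1)`, `some i` is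
`(yᵢ, c yᵢ, eᵢ, Aᵢ)`. -/
def row : Option κ → Fin 2 ⊕ (κ ⊕ κ) → S := fun p =>
  Option.elim p (Sum.elim ![1, 0] (Sum.elim X fun _ => 1))
    (fun i => Sum.elim ![y A X i, c * y A X i] (stdRow A i))

theorem dotProduct_row_none (x : Fin 2 ⊕ (κ ⊕ κ) → S) :
    x ⬝ᵥ row A c X none =
      x (.inl 0) + ∑ j, x (.inr (.inl j)) * X j + ∑ k, x (.inr (.inr k)) := by
  simp [row, dotProduct, Fintype.sum_sum_type, add_assoc]

theorem dotProduct_row_some (x : Fin 2 ⊕ (κ ⊕ κ) → S) (i : κ) :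
    x ⬝ᵥ row A c X (some i) =
      (x (.inl 0) + c * x (.inl 1)) * y A X i + x (.inr (.inl i))
        + (A *ᵥ fun k => x (.inr (.inr k))) i := by
  simp only [dotProduct, row, stdRow, Option.elim_some, Fintype.sum_sum_type, Sum.elim_inl,
    Fin.sum_univ_two, Fin.isValue, cons_val_zero, cons_val_one, cons_val_fin_one, Sum.elim_inr,
    ite_mul, one_mul, zero_mul, Finset.sum_ite_eq, Finset.mem_univ, ↓reduceIte, mulVec, mul_comm]
  ring

variable {A c X}

theorem row_dotProduct_row (hchar : (1 : S) + 1 = 0) (hA : A * Aᵀ = 1) (hc2 : c ^ 2 = 1)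
    (hX : X ⬝ᵥ X = 1 + Fintype.card κ) (p q : Option κ) :
    row A c X p ⬝ᵥ row A c X q = 0 := by
  have row_none_some (j : κ) : row A c X none ⬝ᵥ row A c X (some j) = 0 := by
    rw [dotProduct_row_some]
    simp only [row, y, Option.elim, Sum.elim_inl, Sum.elim_inr, Fin.isValue, cons_val_zero,
      cons_val_one, cons_val_fin_one, mul_zero, add_zero, one_mul, mulVec, dotProduct, mul_one]
    linear_combination (X j + ∑ k, A j k) * hchar
  rcases p with _ | i <;> rcases q with _ | j
  · rw [dotProduct_row_none]
    simp only [row, Option.elim, Sum.elim_inl, Sum.elim_inr, Fin.isValue, cons_val_zero,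
      ← dotProduct.eq_def, hX, Finset.sum_const, Finset.card_univ, nsmul_eq_mul, mul_one]
    linear_combination (1 + (Fintype.card κ : S)) * hchar
  · exact row_none_some j
  · rw [dotProduct_comm]; exact row_none_some i
  · have hAij : (A *ᵥ A i) j = if i = j then 1 else 0 := by
      simpa [mulVec, dotProduct, mul_apply, one_apply, mul_comm, eq_comm] using
        congrFun (congrFun hA j) i
    rw [dotProduct_row_some]
    simp only [row, stdRow, Option.elim, Sum.elim_inl, Sum.elim_inr, Fin.isValue, cons_val_zero,
      cons_val_one, cons_val_fin_one, hAij]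
    linear_combination y A X i * y A X j * hc2
      + (y A X i * y A X j + (if i = j then 1 else 0)) * hchar

omit [DecidableEq κ] in
theorem y_eq_add_mulVec_one : y A X = X + A *ᵥ 1 := by
  ext i
  simp [y, mulVec, dotProduct]

theorem tail_eq_of_orthogonal (hchar : (1 : S) + 1 = 0) (hAA : Aᵀ * A = 1)
    {m : Fin 2 ⊕ (κ ⊕ κ) → S} (hm : ∀ i, m ⬝ᵥ row A c X (some i) = 0)
    (hmid : ∀ j, m (.inr (.inl j)) = 0) (k : κ) :
    m (.inr (.inr k)) = (m (.inl 0) + c * m (.inl 1)) * (1 + ∑ i, X i * A i k) := by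
  set s := m (.inl 0) + c * m (.inl 1)
  have hAw : (A *ᵥ fun k => m (.inr (.inr k))) = s • y A X := by
    ext i
    have h := hm i
    rw [dotProduct_row_some, hmid] at h
    rw [Pi.smul_apply, smul_eq_mul]
    linear_combination h - s * y A X i * hchar
  have hw : (fun k => m (.inr (.inr k))) = s • (X ᵥ* A + 1) :=
    calc (fun k => m (.inr (.inr k))) = (Aᵀ * A) *ᵥ fun k => m (.inr (.inr k)) := by
          rw [hAA, one_mulVec]
      _ = s • (Aᵀ *ᵥ X + (Aᵀ * A) *ᵥ 1) := by
        rw [← mulVec_mulVec, hAw, y_eq_add_mulVec_one, mulVec_smul, mulVec_add, mulVec_mulVec]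
      _ = s • (X ᵥ* A + 1) := by rw [mulVec_transpose, hAA, one_mulVec]
  simpa [vecMul, dotProduct, mul_add, add_comm] using congrFun hw k

theorem eq_smul_of_orthogonal (hchar : (1 : S) + 1 = 0) (hAA : Aᵀ * A = 1) (hc2 : c ^ 2 = 1)
    (hX : X ⬝ᵥ X = 1 + Fintype.card κ) {m : Fin 2 ⊕ (κ ⊕ κ) → S}
    (hm : ∀ p, m ⬝ᵥ row A c X p = 0) (hmid : ∀ j, m (.inr (.inl j)) = 0) :
    m = (m (.inl 0) + c * m (.inl 1)) • (row A c X none + ∑ i, X i • row A c X (some i)) := by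
  have htail := tail_eq_of_orthogonal hchar hAA (fun i => hm (some i)) hmid
  set s := m (.inl 0) + c * m (.inl 1) with hs
  have hsum : ∑ k, (1 + ∑ i, X i * A i k) = Fintype.card κ + ∑ i, X i * ∑ k, A i k := by
    rw [Finset.sum_add_distrib, Finset.sum_comm]
    simp [Finset.mul_sum]
  have hXy : X ⬝ᵥ y A X = 1 + Fintype.card κ + ∑ i, X i * ∑ k, A i k := by
    rw [y_eq_add_mulVec_one, dotProduct_add, hX]
    simp [mulVec, dotProduct]
  have hhead : m (.inl 0) = s * (1 + X ⬝ᵥ y A X) := by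
    have h := hm none
    rw [dotProduct_row_none] at h
    simp only [hmid, zero_mul, Finset.sum_const_zero, add_zero, htail, ← Finset.mul_sum, hsum] at h
    rw [hXy]
    linear_combination h - s * (1 + Fintype.card κ + ∑ i, X i * ∑ k, A i k) * hchar
  ext (a | j | k)
  · fin_cases a
    · simp only [Fin.zero_eta, Fin.isValue, row, Option.elim_none, Option.elim_some, Pi.smul_apply,
        Pi.add_apply, Sum.elim_inl, cons_val_zero, Finset.sum_apply, smul_eq_mul]
      exact hhead
    · simp only [Fin.mk_one, Fin.isValue, row, Option.elim_none, Option.elim_some, Pi.smul_apply,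
        Pi.add_apply, Sum.elim_inl, cons_val_one, cons_val_fin_one, Finset.sum_apply, smul_eq_mul,
        mul_left_comm _ c, ← Finset.mul_sum, zero_add]
      change m (.inl 1) = c * (s * (X ⬝ᵥ y A X))
      linear_combination -m (.inl 1) * hc2 - c * hs - c * hhead - c * s * (X ⬝ᵥ y A X) * hchar
  · simp only [hmid, row, stdRow, Option.elim_none, Option.elim_some, Pi.smul_apply, Pi.add_apply,
      Sum.elim_inr, Sum.elim_inl, Finset.sum_apply, smul_eq_mul, mul_ite, mul_one, mul_zero,
      Finset.sum_ite_eq', Finset.mem_univ, ↓reduceIte]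
    linear_combination -(s * X j) * hchar
  · simp [row, stdRow, htail]

theorem mem_span_row_of_orthogonal (hchar : (1 : S) + 1 = 0) (hA : A * Aᵀ = 1) (hc2 : c ^ 2 = 1)
    (hX : X ⬝ᵥ X = 1 + Fintype.card κ) {x : Fin 2 ⊕ (κ ⊕ κ) → S}
    (hx : ∀ p, x ⬝ᵥ row A c X p = 0) : x ∈ span S (Set.range (row A c X)) := by
  have mem (p : Option κ) : row A c X p ∈ span S (Set.range (row A c X)) := subset_span ⟨p, rfl⟩
  set m := x - ∑ i, x (.inr (.inl i)) • row A c X (some i) with hm_def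
  have hm (p : Option κ) : m ⬝ᵥ row A c X p = 0 := by
    simp [m, sub_dotProduct, sum_dotProduct, hx, row_dotProduct_row hchar hA hc2 hX]
  have hmid (j : κ) : m (.inr (.inl j)) = 0 := by
    simp [m, row, stdRow, Finset.sum_apply]
  rw [← sub_add_cancel x (∑ i, x (.inr (.inl i)) • row A c X (some i)), ← hm_def,
    eq_smul_of_orthogonal hchar (mul_eq_one_comm.mp hA) hc2 hX hm hmid]
  have mem_sum (a : κ → S) : ∑ i, a i • row A c X (some i) ∈ span S (Set.range (row A c X)) :=
    sum_mem fun i _ => smul_mem _ _ (mem (some i))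
  exact add_mem (smul_mem _ _ (add_mem (mem none) (mem_sum X))) (mem_sum _)

theorem coe_span_row_eq_dualSet (hchar : (1 : S) + 1 = 0) (hA : A * Aᵀ = 1) (hc2 : c ^ 2 = 1)
    (hX : X ⬝ᵥ X = 1 + Fintype.card κ) :
    (span S (Set.range (row A c X)) : Set (Fin 2 ⊕ (κ ⊕ κ) → S)) =
      dualSet (span S (Set.range (row A c X)) : Set (Fin 2 ⊕ (κ ⊕ κ) → S)) :=
  coe_span_range_eq_dualSet _ (row_dotProduct_row hchar hA hc2 hX)
    fun _ => mem_span_row_of_orthogonal hchar hA hc2 hX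

end SelfDualExtension

theorem extension_self_dual_standard_form_general
    {S : Type*} [CommRing S] (hchar : (1 : S) + 1 = 0)
    (n : ℕ) (A : Matrix (Fin n) (Fin n) S)
    (C : Submodule S ((Fin n ⊕ Fin n) → S))
    (hCG : C = Submodule.span S (Set.range fun i : Fin n =>
      Sum.elim (fun j => if i = j then (1 : S) else 0) (A i)))
    (hC : (C : Set ((Fin n ⊕ Fin n) → S)) = dualSet (C : Set ((Fin n ⊕ Fin n) → S)))
    (c : S) (hc2 : c ^ 2 = 1)
    (X : Fin n → S) (hX : ∑ i, X i * X i = 1 + (n : S)) :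
    letI r : Fin n → S := fun i => ∑ j, A i j
    letI y : Fin n → S := fun i => X i + r i
    letI Gstar : Option (Fin n) → (Fin 2 ⊕ (Fin n ⊕ Fin n)) → S := fun row =>
      Option.elim row
        (Sum.elim ![1, 0] (Sum.elim X fun _ => 1))
        (fun i => Sum.elim ![y i, c * y i]
          (Sum.elim (fun j => if i = j then (1 : S) else 0) (A i)))
    letI Cstar : Submodule S ((Fin 2 ⊕ (Fin n ⊕ Fin n)) → S) :=
      Submodule.span S (Set.range Gstar)
    (Cstar : Set ((Fin 2 ⊕ (Fin n ⊕ Fin n)) → S)) =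
      dualSet (Cstar : Set ((Fin 2 ⊕ (Fin n ⊕ Fin n)) → S)) := by
  have hstd (i : Fin n) : stdRow A i ∈ C := hCG ▸ subset_span ⟨i, rfl⟩
  have hA : A * Aᵀ = 1 := mul_transpose_eq_one_of_stdRow_orthogonal hchar fun i j =>
    (hC ▸ hstd i : stdRow A i ∈ dualSet (C : Set _)) _ (hstd j)
  exact SelfDualExtension.coe_span_row_eq_dualSet hchar hA hc2 (by simpa [dotProduct] using hX)

/-- Extension theorem in standard form: let `S` be a finite commutative ring of
characteristic 2, `C` a self-dual code of length `2n` over `S` generated by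
`G = [ Iₙ | A ]`, `rᵢ` the sum of the entries of the `i`-th row of `A`, `c` a unit of
`S` with `c² = 1`, and `X = (x₁, …, xₙ) ∈ Sⁿ` with `⟨X, X⟩ = 1 + n·1`.  With
`yᵢ = xᵢ + rᵢ`, the `(n+1) × (2n+2)` matrix `G*` whose first row is
`(1, 0, x₁, …, xₙ, 1, …, 1)` and whose remaining rows are `(yᵢ, c yᵢ, eᵢ, Aᵢ)`
generates a self-dual code `C*` of length `2n + 2` over `S`. -/
theorem extension_self_dual_standard_form
    {S : Type*} [CommRing S] [Fintype S] (hchar : (1 : S) + 1 = 0)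
    (n : ℕ) (A : Matrix (Fin n) (Fin n) S)
    (C : Submodule S ((Fin n ⊕ Fin n) → S))
    (hCG : C = Submodule.span S (Set.range fun i : Fin n =>
      Sum.elim (fun j => if i = j then (1 : S) else 0) (A i)))
    (hC : (C : Set ((Fin n ⊕ Fin n) → S)) = dualSet (C : Set ((Fin n ⊕ Fin n) → S)))
    (c : S) (hc : IsUnit c) (hc2 : c ^ 2 = 1)
    (X : Fin n → S) (hX : ∑ i, X i * X i = 1 + (n : S)) :
    letI r : Fin n → S := fun i => ∑ j, A i j
    letI y : Fin n → S := fun i => X i + r i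
    letI Gstar : Option (Fin n) → (Fin 2 ⊕ (Fin n ⊕ Fin n)) → S := fun row =>
      Option.elim row
        (Sum.elim ![1, 0] (Sum.elim X fun _ => 1))
        (fun i => Sum.elim ![y i, c * y i]
          (Sum.elim (fun j => if i = j then (1 : S) else 0) (A i)))
    letI Cstar : Submodule S ((Fin 2 ⊕ (Fin n ⊕ Fin n)) → S) :=
      Submodule.span S (Set.range Gstar)
    (Cstar : Set ((Fin 2 ⊕ (Fin n ⊕ Fin n)) → S)) =
      dualSet (Cstar : Set ((Fin 2 ⊕ (Fin n ⊕ Fin n)) → S)) :=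
  extension_self_dual_standard_form_general hchar n A C hCG hC c hc2 X hX
end
end
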